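/- Fix complex parameters a, p, q and an integer n ≥ 0. For z ∈ ℂ, define the (2n+1)×(2n+1) matrix M_n(z), indexed by integers r, s with |r| ≤ n and |s| ≤ n, by: M_n(z)(r,s) = 1 if s = r; M_n(z)(r,s) = (q+p)/((z-2r)² - a) if |s - r| = 1; M_n(z)(r,s) = (p²/4)/((z-2r)² - a) if |s - r| = 2; and M_n(z)(r,s) = 0 otherwise. Then for every z ∈ ℂ, det M_n(-z) = det M_n(z); i.e., the truncated Hill determinant is an even function of z. -/

import Mathlib

/-- The truncated `(2n+1) × (2n+1)` Hill determinant associated with the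
Whittaker–Hill equation, with rows/columns indexed by integers `r, s` with
`|r|, |s| ≤ n` (realized via `Fin (2*n+1)` shifted by `n`). -/
noncomputable def hillMatrixTrunc (a p q : ℂ) (n : ℕ) (z : ℂ) :
    Matrix (Fin (2 * n + 1)) (Fin (2 * n + 1)) ℂ :=
  Matrix.of fun i j =>
    let r : ℤ := (i : ℤ) - (n : ℤ)
    let s : ℤ := (j : ℤ) - (n : ℤ)
    if s = r then 1
    else if |s - r| = 1 then (q + p) / ((z - 2 * r) ^ 2 - a)
    else if |s - r| = 2 then (p ^ 2 / 4) / ((z - 2 * r) ^ 2 - a)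
    else 0

theorem Fin.intCast_rev_sub_eq_neg {n : ℕ} (i : Fin (2 * n + 1)) :
    (i.rev : ℤ) - n = -((i : ℤ) - n) := by
  have := Fin.val_rev i
  omega

theorem hillMatrixTrunc_neg (a p q : ℂ) (n : ℕ) (z : ℂ) :
    hillMatrixTrunc a p q n (-z) =
      (hillMatrixTrunc a p q n z).submatrix Fin.revPerm Fin.revPerm := by
  ext i j
  simp only [hillMatrixTrunc, Matrix.submatrix_apply, Matrix.of_apply, Fin.revPerm_apply,
    Fin.intCast_rev_sub_eq_neg, neg_inj, neg_sub_neg]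
  have hden : (z - 2 * ((-((i : ℤ) - n) : ℤ) : ℂ)) ^ 2 =
      (-z - 2 * (((i : ℤ) - n : ℤ) : ℂ)) ^ 2 := by
    push_cast
    ring
  rw [hden, abs_sub_comm]

/-- The truncated Hill determinant is an even function of `z`. -/
theorem hillMatrixTrunc_det_even (a p q : ℂ) (n : ℕ) (z : ℂ) :
    (hillMatrixTrunc a p q n (-z)).det = (hillMatrixTrunc a p q n z).det := by
  rw [hillMatrixTrunc_neg, Matrix.det_submatrix_equiv_self]
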